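/- Let Ω ⊆ ℂⁿ be a domain, p ∈ ∂Ω, and suppose there exist bounded neighbourhoods V ⊂⊂ U of p such that c' := k_Ω(Ω ∩ V, Ω \ U) > 0, where k_Ω denotes the Kobayashi pseudodistance. Then for all distinct z, w ∈ Ω ∩ V one has k_Ω(z,w) > 0. (Royden's localization lemma is used: tanh(k_Ω(z, Ω\U)) · κ_{Ω∩U}(z;v) ≤ κ_Ω(z;v) for z ∈ Ω ∩ U.) -/

import Mathlib

open Set Metric Filter Topology MeasureTheory

noncomputable section

/-- Inverse hyperbolic tangent. -/
def artanh (x : ℝ) : ℝ := (1 / 2) * Real.log ((1 + x) / (1 - x))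

variable {n : ℕ}

/-- The extremal quantity `l̃_Ω` in the definition of the Lempert function:
the infimum of `|α|` over holomorphic discs `φ : Δ → Ω` with `φ 0 = z`, `φ α = w`. -/
def lempertT (Ω : Set (EuclideanSpace ℂ (Fin n))) (z w : EuclideanSpace ℂ (Fin n)) : ℝ :=
  sInf {r : ℝ | ∃ (α : ℂ) (φ : ℂ → EuclideanSpace ℂ (Fin n)), r = ‖α‖ ∧ α ∈ ball (0 : ℂ) 1 ∧
    DifferentiableOn ℂ φ (ball (0 : ℂ) 1) ∧ MapsTo φ (ball (0 : ℂ) 1) Ω ∧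
    φ 0 = z ∧ φ α = w}

/-- The Lempert function `l_Ω = artanh l̃_Ω`. -/
def lempert (Ω : Set (EuclideanSpace ℂ (Fin n))) (z w : EuclideanSpace ℂ (Fin n)) : ℝ :=
  artanh (lempertT Ω z w)

/-- The Kobayashi pseudodistance: the largest pseudodistance below the Lempert function,
realized as the infimum over chains. -/
def kobDist (Ω : Set (EuclideanSpace ℂ (Fin n))) (z w : EuclideanSpace ℂ (Fin n)) : ℝ :=
  sInf {r : ℝ | ∃ (m : ℕ) (x : ℕ → EuclideanSpace ℂ (Fin n)), x 0 = z ∧ x m = w ∧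
    (∀ i ≤ m, x i ∈ Ω) ∧ r = ∑ i ∈ Finset.range m, lempert Ω (x i) (x (i + 1))}

/-- The Kobayashi–Royden pseudometric. -/
def kobRoyden (Ω : Set (EuclideanSpace ℂ (Fin n))) (z v : EuclideanSpace ℂ (Fin n)) : ℝ :=
  sInf {r : ℝ | ∃ (c : ℂ) (φ : ℂ → EuclideanSpace ℂ (Fin n)), r = ‖c‖ ∧
    DifferentiableOn ℂ φ (ball (0 : ℂ) 1) ∧ MapsTo φ (ball (0 : ℂ) 1) Ω ∧
    φ 0 = z ∧ c • deriv φ 0 = v}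

/-- The Kobayashi–Royden length of a curve `γ` on `[a,b]`. -/
def kobLength (Ω : Set (EuclideanSpace ℂ (Fin n))) (γ : ℝ → EuclideanSpace ℂ (Fin n))
    (a b : ℝ) : ℝ := ∫ t in a..b, kobRoyden Ω (γ t) (deriv γ t)

/-- An `ε`-geodesic for the Kobayashi length: an (absolutely) continuous curve in `Ω`
whose Kobayashi–Royden length exceeds the Kobayashi distance of its endpoints by at most `ε`. -/
def IsEpsGeodesic (Ω : Set (EuclideanSpace ℂ (Fin n))) (γ : ℝ → EuclideanSpace ℂ (Fin n))
    (a b : ℝ) (ε : ℝ) : Prop :=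
  a ≤ b ∧ ContinuousOn γ (Icc a b) ∧ MapsTo γ (Icc a b) Ω ∧
    kobLength Ω γ a b ≤ kobDist Ω (γ a) (γ b) + ε

/-- The Gromov product with respect to the Kobayashi distance. -/
def gromovK (Ω : Set (EuclideanSpace ℂ (Fin n))) (z w o : EuclideanSpace ℂ (Fin n)) : ℝ :=
  (kobDist Ω z o + kobDist Ω w o - kobDist Ω z w) / 2

/-- `p ∈ ∂Ω` is a `w`-point: for every neighbourhood `U` of `p` with `Ω \ U ≠ ∅`,
`lim_{z,w→p} inf_{o ∈ Ω \ U} (z|w)^Ω_o = ∞`. -/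
def IsWPoint (Ω : Set (EuclideanSpace ℂ (Fin n))) (p : EuclideanSpace ℂ (Fin n)) : Prop :=
  ∀ U ∈ 𝓝 p, (Ω \ U).Nonempty →
    ∀ M : ℝ, ∃ V ∈ 𝓝 p, ∀ z ∈ Ω ∩ V, ∀ w ∈ Ω ∩ V, ∀ o ∈ Ω \ U, M ≤ gromovK Ω z w o

/-- `p ∈ ∂Ω` is a `v`-point: `Ω` satisfies the weak Gromov property at `p`, i.e.
`liminf_{z→p, w→q} (k_Ω(z,w) - k_Ω(z,o)) > -∞` for every `o ∈ Ω` and every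
boundary point `q ≠ p`. -/
def IsVPoint (Ω : Set (EuclideanSpace ℂ (Fin n))) (p : EuclideanSpace ℂ (Fin n)) : Prop :=
  ∀ o ∈ Ω, ∀ q ∈ frontier Ω, q ≠ p →
    ∃ (M : ℝ) (V : Set (EuclideanSpace ℂ (Fin n))) (W : Set (EuclideanSpace ℂ (Fin n))),
      V ∈ 𝓝 p ∧ W ∈ 𝓝 q ∧ ∀ z ∈ Ω ∩ V, ∀ w ∈ Ω ∩ W, M ≤ kobDist Ω z w - kobDist Ω z o

/-- The Euclidean distance to the boundary. -/
def bdist (Ω : Set (EuclideanSpace ℂ (Fin n))) (z : EuclideanSpace ℂ (Fin n)) : ℝ :=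
  Metric.infDist z (frontier Ω)

end

/-!
A chain from `z` to `w` of Lempert length `< c' / 2` stays in the Kobayashi ball
`{y | k_Ω(z, y) < c' / 2}`, and this ball lies in `U`. Along a holomorphic disc centred in the ball
the Kobayashi distance to `z` grows by at most `artanh |ζ|`, so the disc of radius `tanh (c' / 2)`
is mapped into the bounded set `U`, and the Schwarz lemma bounds the Lempert function of each
step of the chain below by a multiple of the Euclidean distance. Hence every chain from `z` to `w`
has length at least `min (c' / 2) (C ‖z - w‖)`.

Since `l̃_Ω` is an infimum that takes the junk value `0` when no disc joins the two points, one also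
needs that any two points of a domain lie on a holomorphic disc: a path between them is
approximated by an entire curve, and the unit disc is mapped into a thin neighbourhood of `[0, 1]`.
-/

section DiscThroughTwoPoints

open Complex Polynomial

theorem norm_cos_add_mul_I_sub_cos_le (x y : ℝ) :
    ‖cos (x + y * I) - cos x‖ ≤ Real.exp |y| - 1 := by
  have hsplit : cos (x + y * I) - cos x =
      ((Real.cos x * (Real.cosh y - 1) : ℝ) : ℂ) - ((Real.sin x * Real.sinh y : ℝ) : ℂ) * I := by
    rw [cos_add_mul_I]; push_cast; ring
  have hcos : |Real.cos x * (Real.cosh y - 1)| ≤ Real.cosh |y| - 1 := by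
    rw [abs_mul, abs_of_nonneg (sub_nonneg.2 (Real.one_le_cosh y)), Real.cosh_abs]
    exact mul_le_of_le_one_left (sub_nonneg.2 (Real.one_le_cosh y)) (Real.abs_cos_le_one x)
  have hsin : |Real.sin x * Real.sinh y| ≤ Real.sinh |y| := by
    rw [abs_mul, Real.abs_sinh]
    exact mul_le_of_le_one_left (Real.sinh_nonneg_iff.2 (abs_nonneg y)) (Real.abs_sin_le_one x)
  calc ‖cos (x + y * I) - cos x‖
      ≤ |Real.cos x * (Real.cosh y - 1)| + |Real.sin x * Real.sinh y| := by
        rw [hsplit]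
        refine (norm_sub_le _ _).trans_eq ?_
        rw [norm_mul, norm_I, mul_one, norm_real, norm_real, Real.norm_eq_abs, Real.norm_eq_abs]
    _ ≤ Real.exp |y| - 1 := by linarith [Real.cosh_add_sinh |y|]

theorem re_one_add_div_one_sub_pos {ζ : ℂ} (hζ : ‖ζ‖ < 1) : 0 < ((1 + ζ) / (1 - ζ)).re := by
  have hne : 1 - ζ ≠ 0 := by
    intro h
    rw [← sub_eq_zero.1 h, norm_one] at hζ
    exact lt_irrefl _ hζ
  have hnum : (1 + ζ).re * (1 - ζ).re + (1 + ζ).im * (1 - ζ).im = 1 - normSq ζ := by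
    simp only [add_re, sub_re, one_re, add_im, sub_im, one_im, normSq_apply]; ring
  have hζ2 : normSq ζ < 1 := by
    rw [normSq_eq_norm_sq]; nlinarith [norm_nonneg ζ]
  rw [div_re, ← add_div, hnum]
  exact div_pos (by linarith) (normSq_pos.2 hne)

/-- `ζ ↦ log ((1 + ζ) / (1 - ζ))` maps the unit disc onto the strip `|Im| < π / 2`, and
`w ↦ (1 - cos (s * w)) / 2` folds the real axis onto `[0, 1]` and the strip into a thin
neighbourhood of it. -/
noncomputable def segmentDisc (s : ℝ) (ζ : ℂ) : ℂ :=
  (1 - cos (s * log ((1 + ζ) / (1 - ζ)))) / 2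

theorem segmentDisc_zero (s : ℝ) : segmentDisc s 0 = 0 := by
  simp [segmentDisc]

theorem segmentDisc_tanh {s : ℝ} (hs : 0 < s) :
    segmentDisc s (Real.tanh (Real.pi / (2 * s))) = 1 := by
  set α := Real.tanh (Real.pi / (2 * s))
  have hα : α ∈ Icc (-1 : ℝ) 1 := ⟨by linarith [Real.neg_one_lt_tanh (Real.pi / (2 * s))],
    (Real.tanh_lt_one _).le⟩
  have hlog : Real.log ((1 + α) / (1 - α)) = Real.pi / s := by
    have := Real.artanh_tanh (Real.pi / (2 * s))
    rw [Real.artanh_eq_half_log hα] at this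
    field_simp at this ⊢
    linarith
  have hpos : 0 < (1 + α) / (1 - α) := by
    have := Real.tanh_lt_one (Real.pi / (2 * s))
    have := Real.neg_one_lt_tanh (Real.pi / (2 * s))
    exact div_pos (by linarith) (by linarith)
  have hcast : (1 + (α : ℂ)) / (1 - α) = (((1 + α) / (1 - α) : ℝ) : ℂ) := by push_cast; rfl
  rw [segmentDisc, hcast, ← ofReal_log hpos.le, hlog, ← ofReal_mul, mul_div_cancel₀ _ hs.ne',
    ← ofReal_cos, Real.cos_pi]
  norm_num

theorem differentiableOn_segmentDisc (s : ℝ) : DifferentiableOn ℂ (segmentDisc s) (ball 0 1) := by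
  intro ζ hζ
  rw [mem_ball_zero_iff] at hζ
  have hne : 1 - ζ ≠ 0 := fun h => by simpa [h] using re_one_add_div_one_sub_pos hζ
  have hlog : DifferentiableAt ℂ (fun ζ : ℂ => log ((1 + ζ) / (1 - ζ))) ζ :=
    (((differentiableAt_const _).add differentiableAt_id).div
      ((differentiableAt_const _).sub differentiableAt_id) hne).clog
      (Or.inl (re_one_add_div_one_sub_pos hζ))
  exact ((((hlog.const_mul _).ccos).const_sub _).div_const _).differentiableWithinAt

theorem exists_norm_segmentDisc_sub_le {s : ℝ} (hs : 0 < s) {ζ : ℂ} (hζ : ζ ∈ ball (0 : ℂ) 1) :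
    ∃ t ∈ Icc (0 : ℝ) 1, ‖segmentDisc s ζ - t‖ ≤ (Real.exp (s * (Real.pi / 2)) - 1) / 2 := by
  set w : ℂ := s * log ((1 + ζ) / (1 - ζ))
  have him : |w.im| ≤ s * (Real.pi / 2) := by
    have harg := abs_arg_lt_pi_div_two_iff.2
      (Or.inl (re_one_add_div_one_sub_pos (mem_ball_zero_iff.1 hζ)))
    simp only [w, mul_im, ofReal_re, ofReal_im, zero_mul, add_zero, log_im, abs_mul, abs_of_pos hs]
    exact mul_le_mul_of_nonneg_left harg.le hs.le
  refine ⟨(1 - Real.cos w.re) / 2, ⟨?_, ?_⟩, ?_⟩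
  · linarith [Real.cos_le_one w.re]
  · linarith [Real.neg_one_le_cos w.re]
  have hw : cos w = cos (w.re + w.im * I) := by rw [re_add_im]
  have key := norm_cos_add_mul_I_sub_cos_le w.re w.im
  rw [← hw] at key
  have heq : segmentDisc s ζ - (((1 - Real.cos w.re) / 2 : ℝ) : ℂ) = -(cos w - cos w.re) / 2 := by
    rw [segmentDisc]; push_cast; ring
  rw [heq, norm_div, norm_neg, RCLike.norm_ofNat]
  have := Real.exp_le_exp.2 him
  linarith

theorem exists_disc_thickening_unitInterval {η : ℝ} (hη : 0 < η) :
    ∃ α ∈ ball (0 : ℂ) 1, ∃ h : ℂ → ℂ, DifferentiableOn ℂ h (ball 0 1) ∧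
      MapsTo h (ball 0 1) (thickening η (((↑) : ℝ → ℂ) '' Icc 0 1)) ∧ h 0 = 0 ∧ h α = 1 := by
  set s := 2 / Real.pi * Real.log (1 + η)
  have hs : 0 < s := mul_pos (by positivity) (Real.log_pos (by linarith))
  have hexp : Real.exp (s * (Real.pi / 2)) = 1 + η := by
    rw [show s * (Real.pi / 2) = Real.log (1 + η) by simp only [s]; field_simp,
      Real.exp_log (by linarith)]
  refine ⟨Real.tanh (Real.pi / (2 * s)), ?_, segmentDisc s, differentiableOn_segmentDisc s,
    fun ζ hζ => ?_, segmentDisc_zero s, segmentDisc_tanh hs⟩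
  · rw [mem_ball_zero_iff, norm_real, Real.norm_eq_abs]
    exact Real.abs_tanh_lt_one _
  · obtain ⟨t, ht, hnear⟩ := exists_norm_segmentDisc_sub_le hs hζ
    rw [mem_thickening_iff]
    refine ⟨t, mem_image_of_mem _ ht, ?_⟩
    rw [dist_eq_norm]
    linarith

variable {F : Type*} [NormedAddCommGroup F] [NormedSpace ℂ F] [FiniteDimensional ℂ F]

theorem exists_differentiable_near_continuousOn_unitInterval {γ : ℝ → F}
    (hγ : ContinuousOn γ (Icc 0 1)) {ε : ℝ} (hε : 0 < ε) :
    ∃ G : ℂ → F, Differentiable ℂ G ∧ ∀ t ∈ Icc (0 : ℝ) 1, ‖G t - γ t‖ < ε := by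
  let b := Module.finBasis ℝ F
  set M := ∑ k, ‖b k‖
  have hδ : 0 < ε / (M + 1) := div_pos hε (by positivity)
  have hcoord (k) : ContinuousOn (fun t => b.repr (γ t) k) (Icc 0 1) :=
    (b.coord k).continuous_of_finiteDimensional.comp_continuousOn hγ
  choose p hp using fun k => exists_polynomial_near_of_continuousOn 0 1 _ (hcoord k) _ hδ
  refine ⟨fun u => ∑ k, aeval u (p k) • b k,
    Differentiable.fun_sum fun k _ => (p k).differentiable_aeval.smul_const _, fun t ht => ?_⟩
  have hreal (k) : aeval (t : ℂ) (p k) • b k = (p k).eval t • b k := by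
    rw [← Complex.coe_smul, show (t : ℂ) = algebraMap ℝ ℂ t from rfl,
      aeval_algebraMap_apply_eq_algebraMap_eval]
    rfl
  calc ‖∑ k, aeval (t : ℂ) (p k) • b k - γ t‖
      = ‖∑ k, ((p k).eval t - b.repr (γ t) k) • b k‖ := by
        simp only [hreal, sub_smul, Finset.sum_sub_distrib, b.sum_repr]
    _ ≤ ∑ k, ε / (M + 1) * ‖b k‖ := by
        refine (norm_sum_le _ _).trans (Finset.sum_le_sum fun k _ => ?_)
        rw [norm_smul, Real.norm_eq_abs]
        exact mul_le_mul_of_nonneg_right (hp k t ht).le (norm_nonneg _)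
    _ < ε := by
        rw [← Finset.mul_sum, div_mul_eq_mul_div, div_lt_iff₀ (by positivity)]
        nlinarith [show 0 ≤ M by positivity]

theorem exists_differentiable_near_continuousOn_unitInterval_endpoints {γ : ℝ → F}
    (hγ : ContinuousOn γ (Icc 0 1)) {ε : ℝ} (hε : 0 < ε) :
    ∃ G : ℂ → F, Differentiable ℂ G ∧ G 0 = γ 0 ∧ G 1 = γ 1 ∧
      ∀ t ∈ Icc (0 : ℝ) 1, ‖G t - γ t‖ < ε := by
  obtain ⟨G, hG, hGγ⟩ :=
    exists_differentiable_near_continuousOn_unitInterval hγ (div_pos hε three_pos)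
  refine ⟨fun u => G u + (1 - u) • (γ 0 - G 0) + u • (γ 1 - G 1), by fun_prop,
    by simp, by simp, fun t ht => ?_⟩
  have h0 : ‖γ 0 - G 0‖ < ε / 3 := by
    rw [norm_sub_rev]; simpa using hGγ 0 ⟨le_rfl, zero_le_one⟩
  have h1 : ‖γ 1 - G 1‖ < ε / 3 := by
    rw [norm_sub_rev]; simpa using hGγ 1 ⟨zero_le_one, le_rfl⟩
  have hnorm : ‖(1 : ℂ) - t‖ ≤ 1 ∧ ‖(t : ℂ)‖ ≤ 1 := by
    rw [← ofReal_one, ← ofReal_sub, norm_real, norm_real, Real.norm_eq_abs, Real.norm_eq_abs,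
      abs_of_nonneg (sub_nonneg.2 ht.2), abs_of_nonneg ht.1]
    exact ⟨by linarith [ht.1], ht.2⟩
  calc ‖G t + (1 - (t : ℂ)) • (γ 0 - G 0) + (t : ℂ) • (γ 1 - G 1) - γ t‖
      ≤ ‖G t - γ t‖ + ‖(1 - (t : ℂ)) • (γ 0 - G 0)‖ + ‖(t : ℂ) • (γ 1 - G 1)‖ := by
        rw [show G t + (1 - (t : ℂ)) • (γ 0 - G 0) + (t : ℂ) • (γ 1 - G 1) - γ t =
          G t - γ t + (1 - (t : ℂ)) • (γ 0 - G 0) + (t : ℂ) • (γ 1 - G 1) by abel]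
        exact norm_add₃_le
    _ < ε / 3 + ε / 3 + ε / 3 := by
        rw [norm_smul, norm_smul]
        gcongr
        · exact hGγ t ht
        · exact (mul_le_of_le_one_left (norm_nonneg _) hnorm.1).trans_lt h0
        · exact (mul_le_of_le_one_left (norm_nonneg _) hnorm.2).trans_lt h1
    _ = ε := by ring

theorem IsOpen.exists_disc_of_isConnected {Ω : Set F} (hΩ : IsOpen Ω) (hΩc : IsConnected Ω)
    {a b : F} (ha : a ∈ Ω) (hb : b ∈ Ω) :
    ∃ α ∈ ball (0 : ℂ) 1, ∃ φ : ℂ → F, DifferentiableOn ℂ φ (ball 0 1) ∧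
      MapsTo φ (ball 0 1) Ω ∧ φ 0 = a ∧ φ α = b := by
  obtain ⟨γ, hγΩ⟩ := (hΩ.isConnected_iff_isPathConnected.1 hΩc).joinedIn a ha b hb
  obtain ⟨δ, hδ, hδΩ⟩ := (isCompact_Icc.image γ.continuous_extend).exists_thickening_subset_open hΩ
    (image_subset_iff.2 fun t _ => hγΩ _)
  obtain ⟨G, hG, hG0, hG1, hGγ⟩ :=
    exists_differentiable_near_continuousOn_unitInterval_endpoints
      γ.continuous_extend.continuousOn hδ
  obtain ⟨η, hη, hηΩ⟩ := (isCompact_Icc.image continuous_ofReal).exists_thickening_subset_open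
    (hΩ.preimage hG.continuous) <| image_subset_iff.2 fun t ht =>
      hδΩ (mem_thickening_iff.2 ⟨γ.extend t, mem_image_of_mem _ ht, by
        rw [dist_eq_norm]; exact hGγ t ht⟩)
  obtain ⟨α, hα, h, hh, hhη, hh0, hhα⟩ := exists_disc_thickening_unitInterval hη
  refine ⟨α, hα, G ∘ h, hG.comp_differentiableOn hh, fun ζ hζ => hηΩ (hhη hζ), ?_, ?_⟩
  · rw [Function.comp_apply, hh0, hG0, γ.extend_zero]
  · rw [Function.comp_apply, hhα, hG1, γ.extend_one]

end DiscThroughTwoPoints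

section Kobayashi

theorem artanh_eq_real_artanh {x : ℝ} (hx : x ∈ Icc (-1) 1) : artanh x = Real.artanh x :=
  (Real.artanh_eq_half_log hx).symm

theorem half_le_artanh {x : ℝ} (hx0 : 0 ≤ x) (hx1 : x < 1) : x / 2 ≤ artanh x := by
  have hlog : Real.log (1 - x) ≤ -x := by linarith [Real.log_le_sub_one_of_pos (sub_pos.2 hx1)]
  have hlog' : 0 ≤ Real.log (1 + x) := Real.log_nonneg (by linarith)
  rw [artanh, Real.log_div (by linarith) (by linarith)]
  linarith

theorem artanh_le_of_le_tanh {x a : ℝ} (hx : -1 < x) (hxa : x ≤ Real.tanh a) : artanh x ≤ a := by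
  have hx1 : x < 1 := hxa.trans_lt (Real.tanh_lt_one a)
  rw [artanh_eq_real_artanh ⟨hx.le, hx1.le⟩, ← Real.artanh_tanh a]
  exact Real.artanh_le_artanh hx (Real.tanh_lt_one a) hxa

theorem Real.tanh_pos {a : ℝ} (ha : 0 < a) : 0 < Real.tanh a := by
  rw [Real.tanh_eq_sinh_div_cosh]
  exact div_pos (Real.sinh_pos_iff.2 ha) (Real.cosh_pos a)

variable {n : ℕ} {Ω : Set (EuclideanSpace ℂ (Fin n))} {x y z w : EuclideanSpace ℂ (Fin n)}

def lempertRadii (Ω : Set (EuclideanSpace ℂ (Fin n))) (z w : EuclideanSpace ℂ (Fin n)) : Set ℝ :=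
  {r : ℝ | ∃ (α : ℂ) (φ : ℂ → EuclideanSpace ℂ (Fin n)), r = ‖α‖ ∧ α ∈ ball (0 : ℂ) 1 ∧
    DifferentiableOn ℂ φ (ball (0 : ℂ) 1) ∧ MapsTo φ (ball (0 : ℂ) 1) Ω ∧
    φ 0 = z ∧ φ α = w}

theorem lempertT_eq_sInf : lempertT Ω z w = sInf (lempertRadii Ω z w) := rfl

theorem lempertRadii_subset_Ico : lempertRadii Ω z w ⊆ Ico 0 1 := by
  rintro _ ⟨α, -, rfl, hα, -⟩
  exact ⟨norm_nonneg α, mem_ball_zero_iff.1 hα⟩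

theorem lempertRadii_bddBelow : BddBelow (lempertRadii Ω z w) :=
  ⟨0, fun _ hr => (lempertRadii_subset_Ico hr).1⟩

theorem lempertRadii_nonempty (hΩ : IsOpen Ω) (hΩc : IsConnected Ω) (hz : z ∈ Ω) (hw : w ∈ Ω) :
    (lempertRadii Ω z w).Nonempty := by
  obtain ⟨α, hα, φ, hφ⟩ := hΩ.exists_disc_of_isConnected hΩc hz hw
  exact ⟨‖α‖, α, φ, rfl, hα, hφ⟩

theorem lempertT_nonneg : 0 ≤ lempertT Ω z w :=
  Real.sInf_nonneg fun _ hr => (lempertRadii_subset_Ico hr).1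

theorem lempertT_lt_one : lempertT Ω z w < 1 := by
  rcases (lempertRadii Ω z w).eq_empty_or_nonempty with h | ⟨r, hr⟩
  · rw [lempertT_eq_sInf, h, Real.sInf_empty]
    exact one_pos
  · exact (csInf_le lempertRadii_bddBelow hr).trans_lt (lempertRadii_subset_Ico hr).2

theorem half_lempertT_le_lempert : lempertT Ω z w / 2 ≤ lempert Ω z w :=
  half_le_artanh lempertT_nonneg lempertT_lt_one

theorem lempert_nonneg : 0 ≤ lempert Ω z w :=
  (div_nonneg lempertT_nonneg zero_le_two).trans half_lempertT_le_lempert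

theorem lempert_le_artanh_of_disc {α : ℂ} {φ : ℂ → EuclideanSpace ℂ (Fin n)}
    (hα : α ∈ ball (0 : ℂ) 1) (hφd : DifferentiableOn ℂ φ (ball 0 1))
    (hφm : MapsTo φ (ball 0 1) Ω) (hφ0 : φ 0 = z) (hφα : φ α = w) :
    lempert Ω z w ≤ artanh ‖α‖ := by
  have hα1 := mem_ball_zero_iff.1 hα
  rw [lempert, artanh_eq_real_artanh ⟨by linarith [lempertT_nonneg (Ω := Ω) (z := z) (w := w)],
      lempertT_lt_one.le⟩, artanh_eq_real_artanh ⟨by linarith [norm_nonneg α], hα1.le⟩]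
  exact Real.artanh_le_artanh (by linarith [lempertT_nonneg (Ω := Ω) (z := z) (w := w)]) hα1
    (csInf_le lempertRadii_bddBelow ⟨α, φ, rfl, hα, hφd, hφm, hφ0, hφα⟩)

theorem div_mul_dist_le_lempertT {a b : EuclideanSpace ℂ (Fin n)} {t D : ℝ} (ht : 0 < t)
    (ht1 : t ≤ 1) (hD : 0 < D) (hne : (lempertRadii Ω a b).Nonempty) (hab : dist a b ≤ D)
    (hmaps : ∀ ψ : ℂ → EuclideanSpace ℂ (Fin n), DifferentiableOn ℂ ψ (ball 0 1) →
      MapsTo ψ (ball 0 1) Ω → ψ 0 = a → MapsTo ψ (ball 0 t) (closedBall a D)) :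
    t / D * dist a b ≤ lempertT Ω a b := by
  refine le_csInf hne ?_
  rintro _ ⟨β, ψ, rfl, -, hψd, hψm, hψ0, hψβ⟩
  by_cases hβ : β ∈ ball (0 : ℂ) t
  · have hschwarz := Complex.dist_le_div_mul_dist_of_mapsTo_ball (hψd.mono (ball_subset_ball ht1))
      (hψ0 ▸ hmaps ψ hψd hψm hψ0) hβ
    rw [hψ0, hψβ, dist_comm, dist_zero_right] at hschwarz
    calc t / D * dist a b ≤ t / D * (D / t * ‖β‖) := by gcongr
      _ = ‖β‖ := by field_simp
  · rw [mem_ball_zero_iff, not_lt] at hβ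
    calc t / D * dist a b ≤ t / D * D := by gcongr
      _ = t := by field_simp
      _ ≤ ‖β‖ := hβ

def chainSums (Ω : Set (EuclideanSpace ℂ (Fin n))) (z w : EuclideanSpace ℂ (Fin n)) : Set ℝ :=
  {r : ℝ | ∃ (m : ℕ) (x : ℕ → EuclideanSpace ℂ (Fin n)), x 0 = z ∧ x m = w ∧
    (∀ i ≤ m, x i ∈ Ω) ∧ r = ∑ i ∈ Finset.range m, lempert Ω (x i) (x (i + 1))}

theorem chainSums_bddBelow : BddBelow (chainSums Ω z w) := by
  refine ⟨0, ?_⟩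
  rintro _ ⟨m, x, -, -, -, rfl⟩
  exact Finset.sum_nonneg fun _ _ => lempert_nonneg

theorem chainSums_nonempty (hz : z ∈ Ω) (hw : w ∈ Ω) : (chainSums Ω z w).Nonempty :=
  ⟨_, 1, fun i => if i = 0 then z else w, rfl, rfl,
    fun i _ => by dsimp only; split_ifs <;> assumption, rfl⟩

theorem kobDist_le_sum {x : ℕ → EuclideanSpace ℂ (Fin n)} {m : ℕ} (hx : ∀ i ≤ m, x i ∈ Ω) :
    kobDist Ω (x 0) (x m) ≤ ∑ i ∈ Finset.range m, lempert Ω (x i) (x (i + 1)) :=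
  csInf_le chainSums_bddBelow ⟨m, x, rfl, rfl, hx, rfl⟩

theorem add_lempert_mem_chainSums {r : ℝ} (hr : r ∈ chainSums Ω z x) (hy : y ∈ Ω) :
    r + lempert Ω x y ∈ chainSums Ω z y := by
  obtain ⟨m, c, rfl, rfl, hc, rfl⟩ := hr
  refine ⟨m + 1, fun i => if i ≤ m then c i else y, by simp, by simp, fun i hi => ?_, ?_⟩
  · dsimp only
    split_ifs with him
    exacts [hc i him, hy]
  · dsimp only
    rw [Finset.sum_range_succ, if_pos le_rfl, if_neg (by omega)]
    congr 1
    exact Finset.sum_congr rfl fun i hi => by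
      rw [Finset.mem_range] at hi
      rw [if_pos hi.le, if_pos (Nat.succ_le_of_lt hi)]

theorem kobDist_le_kobDist_add_lempert (hz : z ∈ Ω) (hx : x ∈ Ω) (hy : y ∈ Ω) :
    kobDist Ω z y ≤ kobDist Ω z x + lempert Ω x y := by
  rw [← sub_le_iff_le_add]
  refine le_csInf (chainSums_nonempty hz hx) fun r hr => ?_
  rw [sub_le_iff_le_add]
  exact csInf_le chainSums_bddBelow (add_lempert_mem_chainSums hr hy)

theorem kobDist_le_kobDist_center_add_artanh {ψ : ℂ → EuclideanSpace ℂ (Fin n)} (hz : z ∈ Ω)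
    (hψd : DifferentiableOn ℂ ψ (ball 0 1)) (hψm : MapsTo ψ (ball 0 1) Ω) {ζ : ℂ}
    (hζ : ζ ∈ ball (0 : ℂ) 1) :
    kobDist Ω z (ψ ζ) ≤ kobDist Ω z (ψ 0) + artanh ‖ζ‖ :=
  (kobDist_le_kobDist_add_lempert hz (hψm (mem_ball_self one_pos)) (hψm hζ)).trans
    (add_le_add le_rfl (lempert_le_artanh_of_disc hζ hψd hψm rfl rfl))

/-- Chains from `z` of length `< ε` never leave the Kobayashi ball of radius `ε` about `z`. -/
theorem min_le_kobDist {ε c : ℝ} (hc : 0 ≤ c) (hz : z ∈ Ω) (hw : w ∈ Ω)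
    (hstep : ∀ x ∈ Ω, ∀ y ∈ Ω, kobDist Ω z x < ε → kobDist Ω z y < ε →
      c * dist x y ≤ lempert Ω x y) :
    min ε (c * dist z w) ≤ kobDist Ω z w := by
  refine le_csInf (chainSums_nonempty hz hw) ?_
  rintro _ ⟨m, x, rfl, rfl, hx, rfl⟩
  set S := ∑ i ∈ Finset.range m, lempert Ω (x i) (x (i + 1))
  by_cases hS : ε ≤ S
  · exact (min_le_left _ _).trans hS
  have hball : ∀ i ≤ m, kobDist Ω (x 0) (x i) < ε := fun i hi =>
    (kobDist_le_sum fun j hj => hx j (hj.trans hi)).trans_lt <|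
      (Finset.sum_le_sum_of_subset_of_nonneg (Finset.range_subset_range.2 hi)
        fun _ _ _ => lempert_nonneg).trans_lt (not_le.1 hS)
  calc min ε (c * dist (x 0) (x m))
      ≤ c * ∑ i ∈ Finset.range m, dist (x i) (x (i + 1)) :=
        (min_le_right _ _).trans (mul_le_mul_of_nonneg_left (dist_le_range_sum_dist x m) hc)
    _ = ∑ i ∈ Finset.range m, c * dist (x i) (x (i + 1)) := Finset.mul_sum _ _ _
    _ ≤ S := Finset.sum_le_sum fun i hi => by
        rw [Finset.mem_range] at hi
        exact hstep _ (hx i hi.le) _ (hx (i + 1) hi) (hball i hi.le) (hball (i + 1) hi)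

/-- Royden's localization lemma, in the form of a statement about discs. -/
theorem mapsTo_ball_tanh_of_kobDist_lt {U : Set (EuclideanSpace ℂ (Fin n))} {c : ℝ}
    (hz : z ∈ Ω) (hsep : ∀ u ∈ Ω \ U, c ≤ kobDist Ω z u) {ψ : ℂ → EuclideanSpace ℂ (Fin n)}
    (hψd : DifferentiableOn ℂ ψ (ball 0 1)) (hψm : MapsTo ψ (ball 0 1) Ω)
    (hψ0 : kobDist Ω z (ψ 0) < c / 2) :
    MapsTo ψ (ball 0 (Real.tanh (c / 2))) U := by
  intro ζ hζ
  have hζ1 : ζ ∈ ball (0 : ℂ) 1 := ball_subset_ball (Real.tanh_lt_one _).le hζ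
  by_contra hψζ
  refine (hsep _ ⟨hψm hζ1, hψζ⟩).not_gt ?_
  calc kobDist Ω z (ψ ζ) ≤ kobDist Ω z (ψ 0) + artanh ‖ζ‖ :=
        kobDist_le_kobDist_center_add_artanh hz hψd hψm hζ1
    _ < c / 2 + c / 2 := add_lt_add_of_lt_of_le hψ0 <|
        artanh_le_of_le_tanh (by linarith [norm_nonneg ζ]) (mem_ball_zero_iff.1 hζ).le
    _ = c := add_halves c

theorem mul_dist_le_lempert_of_kobDist_lt (hΩ : IsOpen Ω) (hΩc : IsConnected Ω)
    {U : Set (EuclideanSpace ℂ (Fin n))} {c R : ℝ} (hc : 0 < c) (hR : 0 < R)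
    (hUR : U ⊆ closedBall z R) (hz : z ∈ Ω) (hsep : ∀ u ∈ Ω \ U, c ≤ kobDist Ω z u)
    (hx : x ∈ Ω) (hy : y ∈ Ω) (hzx : kobDist Ω z x < c / 2) (hzy : kobDist Ω z y < c / 2) :
    Real.tanh (c / 2) / (4 * R) * dist x y ≤ lempert Ω x y := by
  have hmemU : ∀ u ∈ Ω, kobDist Ω z u < c / 2 → dist u z ≤ R := fun u hu hzu =>
    hUR (by_contra fun huU => (hsep u ⟨hu, huU⟩).not_gt (by linarith))
  have hxy : dist x y ≤ 2 * R := by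
    linarith [dist_triangle_right x y z, hmemU x hx hzx, hmemU y hy hzy]
  have hdisc (ψ : ℂ → EuclideanSpace ℂ (Fin n)) (hψd : DifferentiableOn ℂ ψ (ball 0 1))
      (hψm : MapsTo ψ (ball 0 1) Ω) (hψ0 : ψ 0 = x) :
      MapsTo ψ (ball 0 (Real.tanh (c / 2))) (closedBall x (2 * R)) :=
    (mapsTo_ball_tanh_of_kobDist_lt hz hsep hψd hψm (hψ0 ▸ hzx)).mono_right <|
      hUR.trans (closedBall_subset_closedBall' (by linarith [hmemU x hx hzx, dist_comm x z]))
  calc Real.tanh (c / 2) / (4 * R) * dist x y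
      = Real.tanh (c / 2) / (2 * R) * dist x y / 2 := by ring
    _ ≤ lempertT Ω x y / 2 := by
        gcongr
        exact div_mul_dist_le_lempertT (Real.tanh_pos (half_pos hc)) (Real.tanh_lt_one _).le
          (by positivity) (lempertRadii_nonempty hΩ hΩc hx hy) hxy hdisc
    _ ≤ lempert Ω x y := half_lempertT_le_lempert

end Kobayashi

theorem stmt_5 {n : ℕ} (Ω : Set (EuclideanSpace ℂ (Fin n)))
    (hΩ : IsOpen Ω) (hΩc : IsConnected Ω)
    (U V : Set (EuclideanSpace ℂ (Fin n)))
    (hUbd : Bornology.IsBounded U)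
    (c' : ℝ) (hc' : 0 < c')
    (hsep : ∀ z ∈ Ω ∩ V, ∀ w ∈ Ω \ U, c' ≤ kobDist Ω z w) :
    ∀ z ∈ Ω ∩ V, ∀ w ∈ Ω ∩ V, z ≠ w → 0 < kobDist Ω z w := by
  intro z hz w hw hzw
  obtain ⟨R, hR, hUR⟩ := hUbd.subset_closedBall_lt 0 z
  have hC : 0 < Real.tanh (c' / 2) / (4 * R) :=
    div_pos (Real.tanh_pos (half_pos hc')) (by positivity)
  refine (lt_min (half_pos hc') (mul_pos hC (dist_pos.2 hzw))).trans_le ?_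
  exact min_le_kobDist hC.le hz.1 hw.1 fun x hx y hy hzx hzy =>
    mul_dist_le_lempert_of_kobDist_lt hΩ hΩc hc' hR hUR hz.1 (hsep z hz) hx hy hzx hzy
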